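/- arXiv:1407.5161 — 4 statements merged into one kernel-verified Lean document; each statement's English description precedes it below -/
import Mathlib

section
/- Let D = [[D1, D2ᴴ],[D2, D3]] be a Hermitian positive definite block matrix. Then Tr(D^{-1}) ≥ Tr(D1^{-1}) + Tr(D3^{-1}), with equality if D2 = 0. -/
/-!
The trace of `D⁻¹` is the sum of the traces of its two diagonal blocks. By the Schur complement
formula the upper left block is `D1⁻¹ + (D2 D1⁻¹)ᴴ S⁻¹ (D2 D1⁻¹)`, where the Schur complement
`S = D3 - D2 D1⁻¹ D2ᴴ` is positive semidefinite, so it dominates `D1⁻¹` in the Loewner order;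
symmetrically the lower right block dominates `D3⁻¹`.
Traces are monotone for the Loewner order. When `D2 = 0`, `D⁻¹` is block diagonal.
-/

open Matrix ComplexOrder
open scoped MatrixOrder

namespace Matrix

variable {m n α 𝕜 : Type*} [Fintype m] [Fintype n]

theorem trace_fromBlocks [AddCommMonoid α] (A : Matrix m m α) (B : Matrix m n α)
    (C : Matrix n m α) (D : Matrix n n α) :
    (fromBlocks A B C D).trace = A.trace + D.trace := by
  simp [trace, Fintype.sum_sum_type]

variable [RCLike 𝕜]

theorem re_trace_le_re_trace {A B : Matrix n n 𝕜} (h : A ≤ B) :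
    RCLike.re A.trace ≤ RCLike.re B.trace := by
  simpa [trace_sub] using RCLike.re_le_re (le_iff.mp h).trace_nonneg

variable [DecidableEq m] [DecidableEq n]

theorem PosDef.inv_le_toBlocks₁₁_inv {A : Matrix m m 𝕜} {B : Matrix m n 𝕜}
    {D : Matrix n n 𝕜} (h : (fromBlocks A B Bᴴ D).PosDef) :
    A⁻¹ ≤ ((fromBlocks A B Bᴴ D)⁻¹).toBlocks₁₁ := by
  have hA : A.PosDef := h.submatrix Sum.inl_injective
  let := hA.isUnit.invertible
  let := h.isUnit.invertible
  let := invertibleOfFromBlocks₁₁Invertible A B Bᴴ D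
  have hSchur : (D - Bᴴ * A⁻¹ * B).PosSemidef := (PosDef.fromBlocks₁₁ B D hA).mp h.posSemidef
  have hA_inv_herm : (A⁻¹)ᴴ = A⁻¹ := hA.inv.isHermitian.eq
  rw [le_iff, ← invOf_eq_nonsing_inv, invOf_fromBlocks₁₁_eq, toBlocks_fromBlocks₁₁]
  simp only [invOf_eq_nonsing_inv, add_sub_cancel_left]
  simpa [hA_inv_herm, Matrix.mul_assoc] using
    hSchur.inv.conjTranspose_mul_mul_same (Bᴴ * A⁻¹)

theorem PosDef.inv_le_toBlocks₂₂_inv {A : Matrix m m 𝕜} {B : Matrix m n 𝕜}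
    {D : Matrix n n 𝕜} (h : (fromBlocks A B Bᴴ D).PosDef) :
    D⁻¹ ≤ ((fromBlocks A B Bᴴ D)⁻¹).toBlocks₂₂ := by
  have h_swap : (fromBlocks D Bᴴ Bᴴᴴ A).PosDef := by
    simpa using h.submatrix (Equiv.sumComm n m).injective
  convert h_swap.inv_le_toBlocks₁₁_inv using 1
  rw [conjTranspose_conjTranspose, ← fromBlocks_submatrix_sum_swap_sum_swap,
    ← Equiv.sumComm_apply, inv_submatrix_equiv]
  rfl

end Matrix

/-- For a Hermitian PD block matrix D = [[D1, D2ᴴ],[D2, D3]],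
    Tr(D⁻¹) ≥ Tr(D1⁻¹) + Tr(D3⁻¹), with equality if D2 = 0. -/
theorem trace_inv_block_ge_trace_inv_diag {n1 n2 : ℕ}
    (D1 : Matrix (Fin n1) (Fin n1) ℂ) (D2 : Matrix (Fin n2) (Fin n1) ℂ)
    (D3 : Matrix (Fin n2) (Fin n2) ℂ)
    (hD : (Matrix.fromBlocks D1 D2ᴴ D2 D3).PosDef) :
    (D1⁻¹).trace.re + (D3⁻¹).trace.re ≤ ((Matrix.fromBlocks D1 D2ᴴ D2 D3)⁻¹).trace.re ∧
    (D2 = 0 →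
      ((Matrix.fromBlocks D1 D2ᴴ D2 D3)⁻¹).trace = (D1⁻¹).trace + (D3⁻¹).trace) := by
  refine ⟨?_, fun hD2 => ?_⟩
  · have hD' : (fromBlocks D1 D2ᴴ D2ᴴᴴ D3).PosDef := by rwa [conjTranspose_conjTranspose]
    have h₁ := re_trace_le_re_trace hD'.inv_le_toBlocks₁₁_inv
    have h₂ := re_trace_le_re_trace hD'.inv_le_toBlocks₂₂_inv
    rw [conjTranspose_conjTranspose] at h₁ h₂
    rw [← fromBlocks_toBlocks (fromBlocks D1 D2ᴴ D2 D3)⁻¹, trace_fromBlocks, Complex.add_re]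
    exact add_le_add h₁ h₂
  · have hD1 : IsUnit D1 := (hD.submatrix Sum.inl_injective).isUnit
    have hD3 : IsUnit D3 := (hD.submatrix Sum.inr_injective).isUnit
    subst hD2
    rw [conjTranspose_zero, inv_fromBlocks_zero₂₁_of_isUnit_iff _ _ _ (iff_of_true hD1 hD3),
      trace_fromBlocks]
end

section
/- For Hermitian positive semidefinite N×N matrices A and B, Tr(AB) ≤ Σ_{i=1}^N σ_{A,i} σ_{B,i}, where σ_{A,i} and σ_{B,i} are the eigenvalues of A and B each arranged in decreasing order. -/
/-!
Diagonalise `A = U diag(α) U*` and `B = V diag(β) V*`. With the unitary `W = U* V` one gets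
`Re tr(AB) = ∑ i j, α i * β j * |W i j|²`, and the matrix `(|W i j|²)` is doubly stochastic.
By Birkhoff's theorem it is a convex combination of permutation matrices, and for each
permutation `σ` the rearrangement inequality bounds `∑ i, α i * β (σ i)` by the sum of
products of the eigenvalues sorted in the same order.
-/

open Matrix ComplexOrder

namespace Matrix

variable {m n R 𝕜 : Type*}

section DoublyStochastic

variable [Fintype m] [DecidableEq m] [Fintype n] [DecidableEq n]

theorem submatrix_mem_doublyStochastic [Semiring R] [PartialOrder R] [IsOrderedRing R]
    {M : Matrix n n R} (hM : M ∈ doublyStochastic R n) (e f : m ≃ n) :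
    M.submatrix e f ∈ doublyStochastic R m := by
  rw [mem_doublyStochastic_iff_sum] at hM ⊢
  obtain ⟨hM_nonneg, hM_row, hM_col⟩ := hM
  exact ⟨fun i j => hM_nonneg _ _, fun i => (f.sum_comp (M (e i))).trans (hM_row _),
    fun j => (e.sum_comp (M · (f j))).trans (hM_col _)⟩

theorem dotProduct_mulVec_le_dotProduct_of_mem_doublyStochastic [Field R] [LinearOrder R]
    [IsStrictOrderedRing R] {M : Matrix n n R} (hM : M ∈ doublyStochastic R n)
    {x y : n → R} (hxy : Monovary x y) : x ⬝ᵥ M *ᵥ y ≤ x ⬝ᵥ y := by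
  obtain ⟨w, hw_nonneg, hw_sum, rfl⟩ := exists_eq_sum_perm_of_mem_doublyStochastic hM
  calc x ⬝ᵥ (∑ σ, w σ • σ.permMatrix R) *ᵥ y = ∑ σ, w σ * (x ⬝ᵥ y ∘ σ) := by
        simp only [sum_mulVec, smul_mulVec, permMatrix_mulVec, dotProduct_sum, dotProduct_smul,
          smul_eq_mul]
    _ ≤ ∑ σ, w σ * (x ⬝ᵥ y) := Finset.sum_le_sum fun σ _ =>
        mul_le_mul_of_nonneg_left hxy.sum_mul_comp_perm_le_sum_mul (hw_nonneg σ)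
    _ = x ⬝ᵥ y := by rw [← Finset.sum_mul, hw_sum, one_mul]

end DoublyStochastic

section RCLike

variable [RCLike 𝕜]

def entrywiseNormSq (W : Matrix m n 𝕜) : Matrix m n ℝ := fun i j => ‖W i j‖ ^ 2

variable [Fintype m] [DecidableEq m] [Fintype n] [DecidableEq n]

theorem entrywiseNormSq_mem_doublyStochastic {W : Matrix n n 𝕜} (hW : W ∈ unitaryGroup n 𝕜) :
    W.entrywiseNormSq ∈ doublyStochastic ℝ n := by
  refine mem_doublyStochastic_iff_sum.2 ⟨fun i j => sq_nonneg _, fun i => ?_, fun j => ?_⟩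
  · have h_row : ((∑ j, W.entrywiseNormSq i j : ℝ) : 𝕜) = (W * star W) i i := by
      simp [entrywiseNormSq, mul_apply, RCLike.mul_conj]
    rw [mem_unitaryGroup_iff.1 hW, one_apply_eq] at h_row
    exact_mod_cast h_row
  · have h_col : ((∑ i, W.entrywiseNormSq i j : ℝ) : 𝕜) = (star W * W) j j := by
      simp [entrywiseNormSq, mul_apply, RCLike.conj_mul]
    rw [mem_unitaryGroup_iff'.1 hW, one_apply_eq] at h_col
    exact_mod_cast h_col

theorem trace_diagonal_mul_mul_diagonal_mul_conjTranspose (x : m → ℝ) (y : n → ℝ)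
    (W : Matrix m n 𝕜) :
    (diagonal (RCLike.ofReal ∘ x : m → 𝕜) * W * diagonal (RCLike.ofReal ∘ y : n → 𝕜) * Wᴴ).trace =
      ((x ⬝ᵥ W.entrywiseNormSq *ᵥ y : ℝ) : 𝕜) := by
  simp only [trace, diag, mul_apply (N := Wᴴ), mul_diagonal, diagonal_mul, conjTranspose_apply,
    dotProduct, mulVec, entrywiseNormSq, Finset.mul_sum, Function.comp_apply, RCLike.star_def]
  push_cast
  refine Finset.sum_congr rfl fun i _ => Finset.sum_congr rfl fun j _ => ?_
  rw [← RCLike.mul_conj]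
  ring

variable {A B : Matrix n n 𝕜}

theorem IsHermitian.re_trace_mul (hA : A.IsHermitian) (hB : B.IsHermitian) :
    RCLike.re (A * B).trace = hA.eigenvalues ⬝ᵥ
      (star (hA.eigenvectorUnitary : Matrix n n 𝕜) * hB.eigenvectorUnitary).entrywiseNormSq *ᵥ
        hB.eigenvalues := by
  rw [← RCLike.ofReal_re (K := 𝕜) (_ ⬝ᵥ _), ← trace_diagonal_mul_mul_diagonal_mul_conjTranspose,
    ← star_eq_conjTranspose, star_mul, star_star]
  conv_lhs => rw [hA.spectral_theorem, hB.spectral_theorem]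
  conv_rhs => rw [← mul_assoc, trace_mul_comm]
  simp only [Unitary.conjStarAlgAut_apply, mul_assoc]

end RCLike

end Matrix

/-- Von Neumann / Ruhe trace inequality: for PSD A, B,
    Tr(AB) ≤ Σ_i σ_{A,i} σ_{B,i} with both eigenvalue lists in decreasing order. -/
theorem trace_mul_le_sum_ordered_eigenvalues {N : ℕ}
    (A B : Matrix (Fin N) (Fin N) ℂ) (hA : A.PosSemidef) (hB : B.PosSemidef)
    (a b : Fin N → ℝ) (ha : Antitone a) (hb : Antitone b)
    (hea : ∃ e : Equiv.Perm (Fin N), a = hA.1.eigenvalues ∘ e)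
    (heb : ∃ e : Equiv.Perm (Fin N), b = hB.1.eigenvalues ∘ e) :
    (A * B).trace.re ≤ ∑ i, a i * b i := by
  obtain ⟨e, rfl⟩ := hea
  obtain ⟨f, rfl⟩ := heb
  set U := hA.1.eigenvectorUnitary
  set V := hB.1.eigenvectorUnitary
  set D := (star (U : Matrix (Fin N) (Fin N) ℂ) * V).entrywiseNormSq
  have hD : D ∈ doublyStochastic ℝ (Fin N) :=
    entrywiseNormSq_mem_doublyStochastic (mul_mem (Unitary.star_mem U.2) V.2)
  calc (A * B).trace.re = hA.1.eigenvalues ⬝ᵥ D *ᵥ hB.1.eigenvalues := hA.1.re_trace_mul hB.1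
    _ = (hA.1.eigenvalues ∘ e) ⬝ᵥ D.submatrix e f *ᵥ (hB.1.eigenvalues ∘ f) := by
      rw [submatrix_mulVec_equiv, comp_equiv_dotProduct_comp_equiv]
      simp [Function.comp_assoc]
    _ ≤ _ := dotProduct_mulVec_le_dotProduct_of_mem_doublyStochastic
      (submatrix_mem_doublyStochastic hD e f) (ha.monovary hb)
end

section
/- Let K_q and K_r be Hermitian positive definite, Z_t and Z_r Hermitian positive definite, and S a matrix of compatible size. Then Tr[((Z_r ⊗ Z_t)^{-1} + K_r^{-1} ⊗ S* K_q^{-1} Sᵀ)^{-1}] = Σ_{n=1}^M σ_{r,n} Tr[(Z_t^{-1} + (σ_{r,n}/δ_{r,n}) S* K_q^{-1} Sᵀ)^{-1}], where σ_{r,n} are the eigenvalues of Z_r, δ_{r,n} those of K_r, and Z_r and K_r share the same eigenvectors with eigenvalues paired by the common eigenvector. -/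
/-!
Conjugation by the unitary `U ⊗ 1` turns `(Z_r ⊗ Z_t)⁻¹ + K_r⁻¹ ⊗ A`, where `A = S̄ K_q⁻¹ Sᵀ`, into
the block-diagonal matrix with blocks `σ_n⁻¹ Z_t⁻¹ + δ_n⁻¹ A = σ_n⁻¹ (Z_t⁻¹ + (σ_n / δ_n) A)`.
Each block is positive definite, hence invertible, so the inverse is block diagonal with blocks
`σ_n (Z_t⁻¹ + (σ_n / δ_n) A)⁻¹`; the trace is invariant under the unitary conjugation.
-/

open Matrix Kronecker ComplexOrder

namespace Matrix

variable {m n o α : Type*} [Fintype m] [Fintype n] [Fintype o]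

section CommRing

variable [CommRing α]

theorem trace_reindex (e : m ≃ n) (A : Matrix m m α) : (reindex e e A).trace = A.trace := by
  simp only [trace, diag, reindex_apply, submatrix_apply]
  exact e.symm.sum_comp fun i => A i i

theorem inv_blockDiagonal [DecidableEq n] [DecidableEq o] {D : o → Matrix n n α}
    (hD : ∀ i, IsUnit (D i).det) :
    (blockDiagonal D)⁻¹ = blockDiagonal fun i => (D i)⁻¹ :=
  inv_eq_left_inv <| by
    rw [← blockDiagonal_mul]
    simp only [nonsing_inv_mul _ (hD _)]
    exact blockDiagonal_one

theorem trace_inv_diagonal_kronecker_add_diagonal_kronecker [DecidableEq n] [DecidableEq o]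
    (a b : o → α) (X Y : Matrix n n α) (h : ∀ i, IsUnit (a i • X + b i • Y).det) :
    ((diagonal a ⊗ₖ X + diagonal b ⊗ₖ Y)⁻¹).trace = ∑ i, ((a i • X + b i • Y)⁻¹).trace := by
  have hblocks : diagonal a ⊗ₖ X + diagonal b ⊗ₖ Y = reindex (Equiv.prodComm n o)
      (Equiv.prodComm n o) (blockDiagonal fun i => a i • X + b i • Y) := by
    rw [diagonal_kronecker, diagonal_kronecker]
    exact (congrArg (reindex _ _) (blockDiagonal_add (fun i => a i • X) fun i => b i • Y)).symm
  rw [hblocks, inv_reindex, trace_reindex, inv_blockDiagonal h, trace_blockDiagonal]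

variable [StarRing α]

theorem inv_conj_of_mem_unitaryGroup [DecidableEq m] {U : Matrix m m α}
    (hU : U ∈ unitaryGroup m α) (A : Matrix m m α) :
    (U * A * star U)⁻¹ = U * A⁻¹ * star U := by
  rw [mul_inv_rev, mul_inv_rev, inv_eq_left_inv (Unitary.star_mul_self_of_mem hU),
    inv_eq_left_inv (Unitary.mul_star_self_of_mem hU), Matrix.mul_assoc]

theorem trace_conj_of_mem_unitaryGroup [DecidableEq m] {U : Matrix m m α}
    (hU : U ∈ unitaryGroup m α) (A : Matrix m m α) :
    (U * A * star U).trace = A.trace := by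
  rw [trace_mul_cycle, Unitary.star_mul_self_of_mem hU, Matrix.one_mul]

theorem mul_mul_star_kronecker [DecidableEq n] (U A : Matrix m m α) (B : Matrix n n α) :
    (U * A * star U) ⊗ₖ B =
      (U ⊗ₖ (1 : Matrix n n α)) * (A ⊗ₖ B) * star (U ⊗ₖ (1 : Matrix n n α)) := by
  simp only [star_eq_conjTranspose]
  rw [conjTranspose_kronecker, conjTranspose_one, ← mul_kronecker_mul, ← mul_kronecker_mul,
    Matrix.one_mul, Matrix.mul_one]

end CommRing

theorem inv_diagonal_of_ne_zero [DecidableEq m] {K : Type*} [Field K] {v : m → K}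
    (hv : ∀ i, v i ≠ 0) :
    (diagonal v)⁻¹ = diagonal fun i => (v i)⁻¹ :=
  inv_eq_left_inv <| by simp [diagonal_mul_diagonal, hv]

end Matrix

/-- Kronecker decomposition of the MSE: if Z_r and K_r are simultaneously
    diagonalized by a unitary U with positive eigenvalues σ, δ, then
    Tr[((Z_r ⊗ Z_t)⁻¹ + K_r⁻¹ ⊗ S* K_q⁻¹ Sᵀ)⁻¹]
      = Σ_n σ_n Tr[(Z_t⁻¹ + (σ_n/δ_n) S* K_q⁻¹ Sᵀ)⁻¹]. -/
theorem mse_kronecker_decomposition {M N L : ℕ}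
    (U : Matrix (Fin M) (Fin M) ℂ) (hU : U ∈ Matrix.unitaryGroup (Fin M) ℂ)
    (σ δ : Fin M → ℝ) (hσ : ∀ n, 0 < σ n) (hδ : ∀ n, 0 < δ n)
    (Zr Kr : Matrix (Fin M) (Fin M) ℂ)
    (hZr : Zr = U * Matrix.diagonal (fun n => (σ n : ℂ)) * Uᴴ)
    (hKr : Kr = U * Matrix.diagonal (fun n => (δ n : ℂ)) * Uᴴ)
    (Zt : Matrix (Fin N) (Fin N) ℂ) (hZt : Zt.PosDef)
    (Kq : Matrix (Fin L) (Fin L) ℂ) (hKq : Kq.PosDef)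
    (S : Matrix (Fin N) (Fin L) ℂ) :
    (((Zr ⊗ₖ Zt)⁻¹ + Kr⁻¹ ⊗ₖ (S.map (starRingEnd ℂ) * Kq⁻¹ * Sᵀ))⁻¹).trace =
      ∑ n, (σ n : ℂ) *
        ((Zt⁻¹ + ((σ n / δ n : ℝ) : ℂ) •
          (S.map (starRingEnd ℂ) * Kq⁻¹ * Sᵀ))⁻¹).trace := by
  set A := S.map (starRingEnd ℂ) * Kq⁻¹ * Sᵀ
  have hσ₀ n : (σ n : ℂ) ≠ 0 := Complex.ofReal_ne_zero.mpr (hσ n).ne'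
  have hδ₀ n : (δ n : ℂ) ≠ 0 := Complex.ofReal_ne_zero.mpr (hδ n).ne'
  have hA : A.PosSemidef := hKq.inv.posSemidef.conjTranspose_mul_mul_same Sᵀ
  have hblock n : (σ n : ℂ)⁻¹ • Zt⁻¹ + (δ n : ℂ)⁻¹ • A =
      (σ n : ℂ)⁻¹ • (Zt⁻¹ + ((σ n / δ n : ℝ) : ℂ) • A) := by
    rw [smul_add, smul_smul]
    congr 2
    push_cast
    field_simp [hσ₀ n]
  have hunit n : IsUnit (Zt⁻¹ + ((σ n / δ n : ℝ) : ℂ) • A).det :=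
    (isUnit_iff_isUnit_det _).mp <| PosDef.isUnit <| hZt.inv.add_posSemidef <|
      hA.smul (Complex.zero_le_real.mpr (div_pos (hσ n) (hδ n)).le)
  have hZr' : Zr⁻¹ = U * diagonal (fun n => (σ n : ℂ)⁻¹) * star U := by
    rw [hZr, ← star_eq_conjTranspose, inv_conj_of_mem_unitaryGroup hU, inv_diagonal_of_ne_zero hσ₀]
  have hKr' : Kr⁻¹ = U * diagonal (fun n => (δ n : ℂ)⁻¹) * star U := by
    rw [hKr, ← star_eq_conjTranspose, inv_conj_of_mem_unitaryGroup hU, inv_diagonal_of_ne_zero hδ₀]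
  set V := U ⊗ₖ (1 : Matrix (Fin N) (Fin N) ℂ)
  have hV : V ∈ unitaryGroup (Fin M × Fin N) ℂ := kronecker_mem_unitary hU (one_mem _)
  calc _ = ((V * (diagonal (fun n => (σ n : ℂ)⁻¹) ⊗ₖ Zt⁻¹ +
          diagonal (fun n => (δ n : ℂ)⁻¹) ⊗ₖ A) * star V)⁻¹).trace := by
        rw [inv_kronecker, hZr', hKr', mul_mul_star_kronecker, mul_mul_star_kronecker, ← add_mul,
          ← mul_add]
    _ = ∑ n, (((σ n : ℂ)⁻¹ • Zt⁻¹ + (δ n : ℂ)⁻¹ • A)⁻¹).trace := by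
        rw [inv_conj_of_mem_unitaryGroup hV, trace_conj_of_mem_unitaryGroup hV,
          trace_inv_diagonal_kronecker_add_diagonal_kronecker]
        intro n
        rw [hblock, det_smul]
        exact ((isUnit_iff_ne_zero.mpr (inv_ne_zero (hσ₀ n))).pow _).mul (hunit n)
    _ = _ := by
        refine Finset.sum_congr rfl fun n _ => ?_
        have := invertibleOfNonzero (inv_ne_zero (hσ₀ n))
        rw [hblock, inv_smul _ _ (hunit n), invOf_eq_inv, inv_inv, trace_smul, smul_eq_mul]
end

section
/- Let Z_t be Hermitian positive definite of size (N1+N2) with eigenvalues σ_1 ≥ σ_2 ≥ … ≥ σ_{N1+N2}, and suppose P is Hermitian positive semidefinite of the same size with rank(P) ≤ L < N1+N2. Then Tr[(Z_t^{-1} + P)^{-1}] ≥ Σ_{m=L+1}^{N1+N2} σ_m. -/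
/-!
Put `M = Z⁻¹ + P` and `K = Z - M⁻¹ = M⁻¹ P Z`. Then `rank K ≤ rank P ≤ L` and `Z - K = M⁻¹ ⪰ 0`,
so it suffices that a Hermitian `K ⪯ Z` of rank at most `L` has trace at most the sum of the `L`
largest eigenvalues of `Z`. Indeed, `tr K = ∑ᵢ uᵢ* K uᵢ ≤ ∑ᵢ uᵢ* Z uᵢ` over the at most `L`
eigenvectors `uᵢ` of `K` with nonzero eigenvalue, and expanding in an eigenbasis `(v_m)` of `Z`
this is `∑ₘ σₘ cₘ` with weights `cₘ = ∑ᵢ |⟪vₘ, uᵢ⟫|²` in `[0, 1]` (Bessel) of total mass at most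
`L` (Parseval), which is at most `∑_{m < L} σₘ` since `σ` is decreasing and nonnegative.
-/

open Matrix ComplexOrder Finset

open scoped InnerProductSpace

variable {𝕜 : Type*} [RCLike 𝕜]

namespace Matrix.IsHermitian

variable {n : Type*} [Fintype n] [DecidableEq n] {A : Matrix n n 𝕜}

theorem re_trace_eq_sum_eigenvalues (hA : A.IsHermitian) :
    RCLike.re A.trace = ∑ i, hA.eigenvalues i := by
  simp only [hA.trace_eq_sum_eigenvalues, map_sum, RCLike.ofReal_re]

theorem re_star_dotProduct_mulVec_eq_sum (hA : A.IsHermitian) (x : EuclideanSpace 𝕜 n) :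
    RCLike.re (star ⇑x ⬝ᵥ A *ᵥ ⇑x) =
      ∑ m, hA.eigenvalues m * ‖⟪hA.eigenvectorBasis m, x⟫_𝕜‖ ^ 2 := by
  set v := hA.eigenvectorBasis
  have hv : ∀ m, ⟪v m, toEuclideanLin A x⟫_𝕜 = hA.eigenvalues m * ⟪v m, x⟫_𝕜 := by
    intro m
    have hAv : toEuclideanLin A (v m) = hA.eigenvalues m • v m := by
      rw [toLpLin_apply, hA.mulVec_eigenvectorBasis]; rfl
    rw [← isSymmetric_toEuclideanLin_iff.mpr hA, hAv, RCLike.real_smul_eq_coe_smul (K := 𝕜),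
      inner_smul_left, RCLike.conj_ofReal]
  have hquad : star ⇑x ⬝ᵥ A *ᵥ ⇑x = ⟪x, toEuclideanLin A x⟫_𝕜 := by
    rw [EuclideanSpace.inner_eq_star_dotProduct, dotProduct_comm]; rfl
  rw [hquad, ← v.sum_inner_mul_inner, map_sum]
  refine sum_congr rfl fun m _ => ?_
  rw [hv, mul_left_comm, RCLike.re_ofReal_mul, inner_mul_symm_re_eq_norm, norm_mul,
    norm_inner_symm, sq]

end Matrix.IsHermitian

theorem Fin.sum_mul_le_sum_filter_lt_of_antitone {N L : ℕ} (hL : L < N) {σ c : Fin N → ℝ}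
    (hσ : Antitone σ) (hσ0 : ∀ m, 0 ≤ σ m) (hc0 : ∀ m, 0 ≤ c m) (hc1 : ∀ m, c m ≤ 1)
    (hc : ∑ m, c m ≤ L) :
    ∑ m, σ m * c m ≤ ∑ m ∈ univ.filter (fun m : Fin N => (m : ℕ) < L), σ m := by
  -- compare termwise with the threshold `s = σ L`, which separates the first `L` values
  set s := σ ⟨L, hL⟩
  have hstep : ∀ m : Fin N, σ m * c m ≤ (if (m : ℕ) < L then σ m - s else 0) + s * c m := by
    intro m
    split_ifs with h
    · have : s ≤ σ m := hσ (Fin.mk_le_mk.mpr h.le)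
      nlinarith [hc1 m, hc0 m]
    · have : σ m ≤ s := hσ (Fin.mk_le_mk.mpr (not_lt.mp h))
      nlinarith [hc0 m]
  have hcard : (#{m : Fin N | (m : ℕ) < L} : ℝ) = L := by
    rw [Fin.card_filter_val_lt, min_eq_right hL.le]
  calc ∑ m, σ m * c m ≤ ∑ m : Fin N, ((if (m : ℕ) < L then σ m - s else 0) + s * c m) :=
        sum_le_sum fun m _ => hstep m
    _ = ∑ m ∈ univ.filter (fun m : Fin N => (m : ℕ) < L), σ m - s * L + s * ∑ m, c m := by
        rw [sum_add_distrib, ← mul_sum, ← sum_filter, sum_sub_distrib, Finset.sum_const, nsmul_eq_mul,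
          hcard, mul_comm]
    _ ≤ ∑ m ∈ univ.filter (fun m : Fin N => (m : ℕ) < L), σ m := by nlinarith [hσ0 ⟨L, hL⟩]

variable {N L : ℕ}

theorem Matrix.PosSemidef.sum_re_star_dotProduct_mulVec_le_sum_eigenvalues
    {A : Matrix (Fin N) (Fin N) 𝕜} (hL : L < N) (hA : A.PosSemidef)
    (hord : Antitone hA.1.eigenvalues) {ι : Type*} {u : ι → EuclideanSpace 𝕜 (Fin N)}
    (hu : Orthonormal 𝕜 u) {T : Finset ι} (hT : #T ≤ L) :
    ∑ i ∈ T, RCLike.re (star ⇑(u i) ⬝ᵥ A *ᵥ ⇑(u i)) ≤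
      ∑ m ∈ univ.filter (fun m : Fin N => (m : ℕ) < L), hA.1.eigenvalues m := by
  set v := hA.1.eigenvectorBasis
  simp only [hA.1.re_star_dotProduct_mulVec_eq_sum]
  rw [sum_comm]
  simp only [← mul_sum]
  refine Fin.sum_mul_le_sum_filter_lt_of_antitone hL hord hA.eigenvalues_nonneg
    (fun m => by positivity) (fun m => ?bessel) ?parseval
  case bessel =>
    calc ∑ i ∈ T, ‖⟪v m, u i⟫_𝕜‖ ^ 2 = ∑ i ∈ T, ‖⟪u i, v m⟫_𝕜‖ ^ 2 := by
          simp only [norm_inner_symm]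
      _ ≤ ‖v m‖ ^ 2 := hu.sum_inner_products_le (v m)
      _ = 1 := by rw [v.orthonormal.1 m, one_pow]
  case parseval =>
    calc ∑ m, ∑ i ∈ T, ‖⟪v m, u i⟫_𝕜‖ ^ 2 = ∑ i ∈ T, ‖u i‖ ^ 2 := by
          rw [sum_comm]; simp only [v.sum_sq_norm_inner_right]
      _ = #T := by simp [hu.1]
      _ ≤ L := by exact_mod_cast hT

theorem Matrix.IsHermitian.re_trace_le_of_rank_le {Z K : Matrix (Fin N) (Fin N) 𝕜}
    (hL : L < N) (hZ : Z.PosSemidef) (hord : Antitone hZ.1.eigenvalues) (hK : K.IsHermitian)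
    (hZK : (Z - K).PosSemidef) (hrank : K.rank ≤ L) :
    RCLike.re K.trace ≤ ∑ m ∈ univ.filter (fun m : Fin N => (m : ℕ) < L), hZ.1.eigenvalues m := by
  set u := hK.eigenvectorBasis
  set T := univ.filter fun i => hK.eigenvalues i ≠ 0
  have hT : #T ≤ L := by
    rwa [hK.rank_eq_card_non_zero_eigs, Fintype.card_subtype] at hrank
  calc RCLike.re K.trace = ∑ i ∈ T, hK.eigenvalues i := by
        rw [hK.re_trace_eq_sum_eigenvalues, sum_filter_ne_zero]
    _ ≤ ∑ i ∈ T, RCLike.re (star ⇑(u i) ⬝ᵥ Z *ᵥ ⇑(u i)) := by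
        refine sum_le_sum fun i _ => ?_
        have := hZK.re_dotProduct_nonneg (u i)
        rw [sub_mulVec, dotProduct_sub, map_sub, ← hK.eigenvalues_eq] at this
        linarith
    _ ≤ _ := hZ.sum_re_star_dotProduct_mulVec_le_sum_eigenvalues hL hord u.orthonormal hT

theorem Matrix.sub_inv_inv_add_eq {n R : Type*} [Fintype n] [DecidableEq n] [CommRing R]
    {Z P : Matrix n n R} (hZ : IsUnit Z.det) (hM : IsUnit (Z⁻¹ + P).det) :
    Z - (Z⁻¹ + P)⁻¹ = (Z⁻¹ + P)⁻¹ * P * Z := by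
  calc Z - (Z⁻¹ + P)⁻¹ = (Z⁻¹ + P)⁻¹ * ((Z⁻¹ + P) * Z - 1) := by
        rw [Matrix.mul_sub, nonsing_inv_mul_cancel_left _ _ hM, Matrix.mul_one]
    _ = (Z⁻¹ + P)⁻¹ * P * Z := by
        rw [Matrix.add_mul, nonsing_inv_mul _ hZ, add_sub_cancel_left, Matrix.mul_assoc]

/-- MSE floor for short training: if P is PSD of rank ≤ L < N1+N2 and Z_t is PD
    with decreasingly ordered eigenvalues σ, then
    Tr[(Z_t⁻¹ + P)⁻¹] ≥ Σ_{m=L+1}^{N1+N2} σ_m. -/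
theorem mse_floor_of_rank_deficient_training {N1 N2 L : ℕ} (hL : L < N1 + N2)
    (Zt : Matrix (Fin (N1 + N2)) (Fin (N1 + N2)) ℂ) (hZt : Zt.PosDef)
    (hord : Antitone hZt.1.eigenvalues)
    (P : Matrix (Fin (N1 + N2)) (Fin (N1 + N2)) ℂ) (hP : P.PosSemidef)
    (hrank : P.rank ≤ L) :
    (∑ m ∈ Finset.univ.filter (fun m : Fin (N1 + N2) => L ≤ (m : ℕ)),
        hZt.1.eigenvalues m) ≤ ((Zt⁻¹ + P)⁻¹).trace.re := by
  set M := Zt⁻¹ + P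
  have hM : M.PosDef := hZt.inv.add_posSemidef hP
  have hK : Zt - M⁻¹ = M⁻¹ * P * Zt :=
    sub_inv_inv_add_eq ((isUnit_iff_isUnit_det _).mp hZt.isUnit)
      ((isUnit_iff_isUnit_det _).mp hM.isUnit)
  have hfloor := (hZt.1.sub hM.inv.1).re_trace_le_of_rank_le hL hZt.posSemidef hord
    (by rw [sub_sub_cancel]; exact hM.posSemidef.inv)
    (hK ▸ (rank_mul_le_left _ _).trans ((rank_mul_le_right _ _).trans hrank))
  have hsplit := sum_filter_add_sum_filter_not univ
    (fun m : Fin (N1 + N2) => (m : ℕ) < L) hZt.1.eigenvalues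
  simp only [not_lt] at hsplit
  rw [trace_sub, map_sub, hZt.1.re_trace_eq_sum_eigenvalues, ← hsplit,
    RCLike.re_to_complex] at hfloor
  linarith
end
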